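/- arXiv:2002.03371 — 5 statements merged into one kernel-verified Lean document; each statement's English description precedes it below -/
import Mathlib

section
/- Let ρ, p, H > 0 with H ≥ √(1+p²/ρ²) + p/ρ, and let v, v* ∈ R^3 with |v| < 1, |v*| < 1. Set W = 1/√(1-|v|²). Then ρH W²(1 - v·v*) - p - ρW√(1-|v*|²) ≥ (1/2) ρH W² |v - v*|². -/
set_option maxHeartbeats 1000000


/-- Key lower bound `Π₁⁽¹⁾ ≥ (1/2)ρHW²|v-v*|²`: for `ρ, p, H > 0` with
`H ≥ √(1+p²/ρ²) + p/ρ` and `v, v* ∈ ℝ³` with `|v| < 1`, `|v*| < 1`,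
`W = 1/√(1-|v|²)`, one has
`ρH W²(1 - v·v*) - p - ρW√(1-|v*|²) ≥ (1/2) ρH W² |v - v*|²`. -/
theorem stmt7 (ρ p H : ℝ) (hρ : 0 < ρ) (hp : 0 < p) (hHpos : 0 < H)
    (hH : H ≥ Real.sqrt (1 + p ^ 2 / ρ ^ 2) + p / ρ)
    (v vs : Fin 3 → ℝ)
    (hv : Real.sqrt (∑ i, v i ^ 2) < 1) (hvs : Real.sqrt (∑ i, vs i ^ 2) < 1)
    (W : ℝ) (hW : W = 1 / Real.sqrt (1 - ∑ i, v i ^ 2)) :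
    ρ * H * W ^ 2 * (1 - ∑ i, v i * vs i) - p
        - ρ * W * Real.sqrt (1 - ∑ i, vs i ^ 2)
      ≥ (1 / 2) * ρ * H * W ^ 2 * (∑ i, (v i - vs i) ^ 2) := by
  set A := ∑ i, v i ^ 2 with hAdef
  set B := ∑ i, vs i ^ 2 with hBdef
  set D := ∑ i, v i * vs i with hDdef
  have hA0 : 0 ≤ A := Finset.sum_nonneg fun i _ => sq_nonneg _
  have hB0 : 0 ≤ B := Finset.sum_nonneg fun i _ => sq_nonneg _
  have hA1 : A < 1 := by
    nlinarith [Real.sq_sqrt hA0, Real.sqrt_nonneg A]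
  have hB1 : B < 1 := by
    nlinarith [Real.sq_sqrt hB0, Real.sqrt_nonneg B]
  have hsum : ∑ i, (v i - vs i) ^ 2 = A - 2 * D + B := by
    simp only [hAdef, hBdef, hDdef, Fin.sum_univ_three]; ring
  set t := Real.sqrt (1 - A) with htdef
  set u := Real.sqrt (1 - B) with hudef
  have ht0 : 0 < t := Real.sqrt_pos.mpr (by linarith)
  have hu0 : 0 < u := Real.sqrt_pos.mpr (by linarith)
  have ht2 : t ^ 2 = 1 - A := Real.sq_sqrt (by linarith)
  have hu2 : u ^ 2 = 1 - B := Real.sq_sqrt (by linarith)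
  have hWt : W * t = 1 := by
    rw [hW]; field_simp
  have hW0 : 0 < W := by
    rw [hW]; positivity
  -- q := p/ρ ;  (H - q)^2 ≥ 1 + q^2
  have hsq : Real.sqrt (1 + p ^ 2 / ρ ^ 2) ^ 2 = 1 + p ^ 2 / ρ ^ 2 :=
    Real.sq_sqrt (by positivity)
  have hsn : 0 ≤ Real.sqrt (1 + p ^ 2 / ρ ^ 2) := Real.sqrt_nonneg _
  have hqsq : (p / ρ) ^ 2 = p ^ 2 / ρ ^ 2 := by rw [div_pow]
  have hdisc : H ^ 2 - 2 * (p / ρ) * H - 1 ≥ 0 := by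
    nlinarith [hH, hsq, hsn, hqsq]
  have hkey : H * (t ^ 2 + u ^ 2) - 2 * (p / ρ) * t ^ 2 - 2 * u * t ≥ 0 := by
    nlinarith [sq_nonneg (H * u - t), mul_nonneg (sq_nonneg t) hdisc, hHpos]
  have hkey2 : ρ * W ^ 2 *
      (H * (t ^ 2 + u ^ 2) - 2 * (p / ρ) * t ^ 2 - 2 * u * t) ≥ 0 :=
    mul_nonneg (by positivity) hkey
  have hpr : ρ * (p / ρ) = p := by field_simp
  have hA' : A = 1 - t ^ 2 := by linarith
  have hB' : B = 1 - u ^ 2 := by linarith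
  rw [hsum, hA', hB']
  have hid : ρ * H * W ^ 2 * (1 - D) - p - ρ * W * u
      - 1 / 2 * ρ * H * W ^ 2 * ((1 - t ^ 2) - 2 * D + (1 - u ^ 2))
      = (1 / 2) * (ρ * W ^ 2 *
        (H * (t ^ 2 + u ^ 2) - 2 * (p / ρ) * t ^ 2 - 2 * u * t)) := by
    linear_combination (W ^ 2 * t ^ 2) * hpr + (p * (W * t + 1) + ρ * W * u) * hWt
  linarith [hkey2, hid]
end

section
/- Let v, v* ∈ R^3 with |v| < 1, |v*| < 1, and set W = 1/√(1-|v|²). Define the 7×7 symmetric block matrices A₃ = [[G, -G, 0],[-G, H, 0],[0, 0, W²|v-v*|²]] and A₂ = [[O, O, b₁ᵀ],[O, O, b₂ᵀ],[b₁, b₂, 0]], where G = (1-|v*|²)I₃ + (v*)ᵀv*, H = (1 + |v-v*|² - |v*|²)I₃ + (v*)ᵀv* - (v-v*)ᵀ(v-v*), b₁ = (1-|v*|²)(v*-v) + (|v*|² - v·v*)v*, b₂ = (1-|v|²)(v-v*) + (|v|² - v·v*)v. Then both A₃ + A₂ and A₃ - A₂ are positive semi-definite. -/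
/-!
Write a vector of `ℝ⁷` as `(p, q, t)` with `p, q ∈ ℝ³`, and put `d = v - v*`. The quadratic form
of `A₃ ± A₂` is `(p - q)ᵀ G (p - q) + qᵀ (H - G) q + W²|d|² t² ± 2t (b₁·p + b₂·q)`, where
`H - G = |d|² I - dᵀd` is positive semidefinite by Cauchy–Schwarz and `G` is because `|v*| ≤ 1`.
The linear term is absorbed exactly by shifting `p - q` by `∓t d` and `q` by `±t v*`: the form
equals the same two forms at the shifted vectors plus `(W² - 1)|d|² t²`, and `W ≥ 1`.
-/

open Matrix

theorem one_le_sq_one_div_sqrt_one_sub {a : ℝ} (h₀ : 0 ≤ a) (h₁ : a < 1) :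
    1 ≤ (1 / √(1 - a)) ^ 2 := by
  rw [div_pow, one_pow, Real.sq_sqrt (by linarith)]
  exact one_le_one_div (by linarith) (by linarith)

theorem sq_dotProduct_le {ι : Type*} [Fintype ι] (x y : ι → ℝ) :
    (x ⬝ᵥ y) ^ 2 ≤ (x ⬝ᵥ x) * (y ⬝ᵥ y) := by
  simpa only [dotProduct, sq] using Finset.sum_mul_sq_le_sq_mul_sq Finset.univ x y

namespace SourceMatrix

variable {ι : Type*} [Fintype ι] [DecidableEq ι]

-- `u` stands for `v*`.
def G (u : ι → ℝ) : Matrix ι ι ℝ := (1 - u ⬝ᵥ u) • 1 + vecMulVec u u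

def H (v u : ι → ℝ) : Matrix ι ι ℝ :=
  (1 + (v - u) ⬝ᵥ (v - u) - u ⬝ᵥ u) • 1 + vecMulVec u u - vecMulVec (v - u) (v - u)

def b₁ (v u : ι → ℝ) : ι → ℝ := (1 - u ⬝ᵥ u) • (u - v) + (u ⬝ᵥ u - v ⬝ᵥ u) • u

def b₂ (v u : ι → ℝ) : ι → ℝ := (1 - v ⬝ᵥ v) • (v - u) + (v ⬝ᵥ v - v ⬝ᵥ u) • v

theorem dotProduct_G_mulVec (u x : ι → ℝ) :
    x ⬝ᵥ G u *ᵥ x = (1 - u ⬝ᵥ u) * (x ⬝ᵥ x) + (u ⬝ᵥ x) ^ 2 := by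
  simp only [G, add_mulVec, smul_mulVec, one_mulVec, vecMulVec_mulVec, dotProduct_add,
    dotProduct_smul, smul_eq_mul, op_smul_eq_smul, dotProduct_comm x u]
  ring

theorem H_sub_G (v u : ι → ℝ) :
    H v u - G u = ((v - u) ⬝ᵥ (v - u)) • 1 - vecMulVec (v - u) (v - u) := by
  simp only [H, G]
  module

theorem dotProduct_H_sub_G_mulVec (v u x : ι → ℝ) :
    x ⬝ᵥ (H v u - G u) *ᵥ x = ((v - u) ⬝ᵥ (v - u)) * (x ⬝ᵥ x) - ((v - u) ⬝ᵥ x) ^ 2 := by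
  rw [H_sub_G]
  simp only [sub_mulVec, smul_mulVec, one_mulVec, vecMulVec_mulVec, dotProduct_sub,
    dotProduct_smul, smul_eq_mul, op_smul_eq_smul, dotProduct_comm x (v - u)]
  ring

theorem dotProduct_G_mulVec_nonneg {u : ι → ℝ} (hu : u ⬝ᵥ u ≤ 1) (x : ι → ℝ) :
    0 ≤ x ⬝ᵥ G u *ᵥ x := by
  rw [dotProduct_G_mulVec]
  have : 0 ≤ x ⬝ᵥ x := dotProduct_star_self_nonneg x
  nlinarith [sq_nonneg (u ⬝ᵥ x)]

theorem dotProduct_H_sub_G_mulVec_nonneg (v u x : ι → ℝ) :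
    0 ≤ x ⬝ᵥ (H v u - G u) *ᵥ x := by
  rw [dotProduct_H_sub_G_mulVec, sub_nonneg]
  exact sq_dotProduct_le (v - u) x

theorem quadForm_complete_square (v u p q : ι → ℝ) (t c : ℝ) :
    (p - q) ⬝ᵥ G u *ᵥ (p - q) + q ⬝ᵥ (H v u - G u) *ᵥ q + c * t ^ 2
        + 2 * t * (b₁ v u ⬝ᵥ p + b₂ v u ⬝ᵥ q) =
      (p - q - t • (v - u)) ⬝ᵥ G u *ᵥ (p - q - t • (v - u))
        + (q + t • u) ⬝ᵥ (H v u - G u) *ᵥ (q + t • u) + (c - (v - u) ⬝ᵥ (v - u)) * t ^ 2 := by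
  simp only [dotProduct_G_mulVec, dotProduct_H_sub_G_mulVec]
  simp only [b₁, b₂, dotProduct_add, dotProduct_sub, dotProduct_smul, add_dotProduct,
    sub_dotProduct, smul_dotProduct, smul_eq_mul]
  simp only [dotProduct_comm p u, dotProduct_comm q u, dotProduct_comm p v, dotProduct_comm q v,
    dotProduct_comm q p, dotProduct_comm u v]
  ring

theorem quadForm_nonneg {v u : ι → ℝ} {c : ℝ} (hu : u ⬝ᵥ u ≤ 1) (hc : (v - u) ⬝ᵥ (v - u) ≤ c)
    (p q : ι → ℝ) (t : ℝ) :
    0 ≤ (p - q) ⬝ᵥ G u *ᵥ (p - q) + q ⬝ᵥ (H v u - G u) *ᵥ q + c * t ^ 2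
        + 2 * t * (b₁ v u ⬝ᵥ p + b₂ v u ⬝ᵥ q) := by
  rw [quadForm_complete_square]
  have hG := dotProduct_G_mulVec_nonneg hu (p - q - t • (v - u))
  have hH := dotProduct_H_sub_G_mulVec_nonneg v u (q + t • u)
  have hct : 0 ≤ (c - (v - u) ⬝ᵥ (v - u)) * t ^ 2 := mul_nonneg (sub_nonneg.2 hc) (sq_nonneg t)
  linarith

theorem G_isSymm (u : ι → ℝ) : (G u).IsSymm :=
  (isSymm_one.smul _).add (transpose_vecMulVec u u)

theorem H_isSymm (v u : ι → ℝ) : (H v u).IsSymm :=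
  ((isSymm_one.smul _).add (transpose_vecMulVec u u)).sub (transpose_vecMulVec _ _)

def A₃ (G H : Matrix (Fin 3) (Fin 3) ℝ) (c : ℝ) : Matrix (Fin 7) (Fin 7) ℝ := fun i j =>
  if hi : i.val < 3 then
    (if hj : j.val < 3 then G ⟨i.val, hi⟩ ⟨j.val, hj⟩
     else if hj6 : j.val < 6 then
       -G ⟨i.val, hi⟩ ⟨j.val - 3, Nat.sub_lt_left_of_lt_add (not_lt.1 hj) hj6⟩
     else 0)
  else if hi6 : i.val < 6 then
    (if hj : j.val < 3 then -G ⟨i.val - 3, Nat.sub_lt_left_of_lt_add (not_lt.1 hi) hi6⟩ ⟨j.val, hj⟩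
     else if hj6 : j.val < 6 then
       H ⟨i.val - 3, Nat.sub_lt_left_of_lt_add (not_lt.1 hi) hi6⟩
         ⟨j.val - 3, Nat.sub_lt_left_of_lt_add (not_lt.1 hj) hj6⟩
     else 0)
  else if j.val < 6 then 0 else c

def A₂ (b₁ b₂ : Fin 3 → ℝ) : Matrix (Fin 7) (Fin 7) ℝ := fun i j =>
  if hi : i.val < 3 then (if j.val < 6 then 0 else b₁ ⟨i.val, hi⟩)
  else if hi6 : i.val < 6 then
    (if j.val < 6 then 0 else b₂ ⟨i.val - 3, Nat.sub_lt_left_of_lt_add (not_lt.1 hi) hi6⟩)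
  else if hj : j.val < 3 then b₁ ⟨j.val, hj⟩
  else if hj6 : j.val < 6 then b₂ ⟨j.val - 3, Nat.sub_lt_left_of_lt_add (not_lt.1 hj) hj6⟩
  else 0

theorem A₃_isSymm {G H : Matrix (Fin 3) (Fin 3) ℝ} (hG : G.IsSymm) (hH : H.IsSymm) (c : ℝ) :
    (A₃ G H c).IsSymm := by
  refine IsSymm.ext fun i j => ?_
  simp only [A₃]
  split_ifs <;> first
    | rfl | omega | exact hG.apply _ _ | exact hH.apply _ _ | exact congrArg Neg.neg (hG.apply _ _)

theorem A₂_isSymm (b₁ b₂ : Fin 3 → ℝ) : (A₂ b₁ b₂).IsSymm := by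
  refine IsSymm.ext fun i j => ?_
  simp only [A₂]
  split_ifs <;> first | rfl | omega

theorem dotProduct_A₃_mulVec (G H : Matrix (Fin 3) (Fin 3) ℝ) (c : ℝ) (x : Fin 7 → ℝ) :
    x ⬝ᵥ A₃ G H c *ᵥ x =
      (![x 0, x 1, x 2] - ![x 3, x 4, x 5]) ⬝ᵥ G *ᵥ (![x 0, x 1, x 2] - ![x 3, x 4, x 5])
        + ![x 3, x 4, x 5] ⬝ᵥ (H - G) *ᵥ ![x 3, x 4, x 5] + c * x 6 ^ 2 := by
  simp only [dotProduct, mulVec, A₃, Fin.sum_univ_seven, Fin.sum_univ_three, Fin.isValue,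
    Fin.coe_ofNat_eq_mod, Nat.reduceMod, Nat.reduceLT, ↓reduceDIte, ↓reduceIte, Nat.reduceSub,
    Fin.reduceFinMk, Fin.zero_eta, Fin.mk_one, cons_val_zero, cons_val_one, cons_val_two, head_cons,
    tail_cons, Pi.sub_apply, Matrix.sub_apply]
  ring

theorem dotProduct_A₂_mulVec (b₁ b₂ : Fin 3 → ℝ) (x : Fin 7 → ℝ) :
    x ⬝ᵥ A₂ b₁ b₂ *ᵥ x = 2 * x 6 * (b₁ ⬝ᵥ ![x 0, x 1, x 2] + b₂ ⬝ᵥ ![x 3, x 4, x 5]) := by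
  simp only [dotProduct, mulVec, A₂, Fin.sum_univ_seven, Fin.sum_univ_three, Fin.isValue,
    Fin.coe_ofNat_eq_mod, Nat.reduceMod, Nat.reduceLT, ↓reduceDIte, ↓reduceIte, Nat.reduceSub,
    Fin.reduceFinMk, Fin.zero_eta, Fin.mk_one, cons_val_zero, cons_val_one, cons_val_two, head_cons,
    tail_cons]
  ring

end SourceMatrix

/-- The 7×7 block matrices `A₃ ± A₂` from the proof of the source-term estimate
are positive semi-definite. Blocks: `G = (1-|v*|²)I₃ + (v*)ᵀv*`,
`H = (1+|v-v*|²-|v*|²)I₃ + (v*)ᵀv* - (v-v*)ᵀ(v-v*)`,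
`b₁ = (1-|v*|²)(v*-v) + (|v*|²-v·v*)v*`, `b₂ = (1-|v|²)(v-v*) + (|v|²-v·v*)v`,
`A₃ = [[G,-G,0],[-G,H,0],[0,0,W²|v-v*|²]]`, `A₂ = [[O,O,b₁ᵀ],[O,O,b₂ᵀ],[b₁,b₂,0]]`. -/
theorem stmt9 (v vs : Fin 3 → ℝ)
    (hv : Real.sqrt (∑ i, v i ^ 2) < 1) (hvs : Real.sqrt (∑ i, vs i ^ 2) < 1)
    (W : ℝ) (hW : W = 1 / Real.sqrt (1 - ∑ i, v i ^ 2))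
    (G H : Matrix (Fin 3) (Fin 3) ℝ) (b1 b2 : Fin 3 → ℝ)
    (hG : G = (1 - ∑ i, vs i ^ 2) • (1 : Matrix (Fin 3) (Fin 3) ℝ) + Matrix.vecMulVec vs vs)
    (hH : H = (1 + (∑ i, (v i - vs i) ^ 2) - ∑ i, vs i ^ 2) • (1 : Matrix (Fin 3) (Fin 3) ℝ)
        + Matrix.vecMulVec vs vs - Matrix.vecMulVec (v - vs) (v - vs))
    (hb1 : b1 = (1 - ∑ i, vs i ^ 2) • (vs - v) + ((∑ i, vs i ^ 2) - ∑ i, v i * vs i) • vs)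
    (hb2 : b2 = (1 - ∑ i, v i ^ 2) • (v - vs) + ((∑ i, v i ^ 2) - ∑ i, v i * vs i) • v)
    (A3 A2 : Matrix (Fin 7) (Fin 7) ℝ)
    (hA3 : A3 = fun i j =>
      if hi : i.val < 3 then
        (if hj : j.val < 3 then G ⟨i.val, hi⟩ ⟨j.val, hj⟩
         else if hj6 : j.val < 6 then -G ⟨i.val, hi⟩ ⟨j.val - 3, by omega⟩ else 0)
      else if hi6 : i.val < 6 then
        (if hj : j.val < 3 then -G ⟨i.val - 3, by omega⟩ ⟨j.val, hj⟩
         else if hj6 : j.val < 6 then H ⟨i.val - 3, by omega⟩ ⟨j.val - 3, by omega⟩ else 0)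
      else
        (if hj6 : j.val < 6 then 0
         else W ^ 2 * (∑ i, (v i - vs i) ^ 2)))
    (hA2 : A2 = fun i j =>
      if hi : i.val < 3 then
        (if hj6 : j.val < 6 then 0 else b1 ⟨i.val, hi⟩)
      else if hi6 : i.val < 6 then
        (if hj6 : j.val < 6 then 0 else b2 ⟨i.val - 3, by omega⟩)
      else
        (if hj : j.val < 3 then b1 ⟨j.val, hj⟩
         else if hj6 : j.val < 6 then b2 ⟨j.val - 3, by omega⟩ else 0)) :
    (A3 + A2).PosSemidef ∧ (A3 - A2).PosSemidef := by
  have sum_sq : ∀ y : Fin 3 → ℝ, ∑ i, y i ^ 2 = y ⬝ᵥ y := fun y => by simp only [dotProduct, sq]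
  rw [show ∑ i, (v i - vs i) ^ 2 = (v - vs) ⬝ᵥ (v - vs) from sum_sq (v - vs)] at hH hA3
  rw [Real.sqrt_lt' one_pos, one_pow] at hv hvs
  simp only [sum_sq] at hv hvs hW hG hH hb1 hb2
  set c := W ^ 2 * ((v - vs) ⬝ᵥ (v - vs))
  have hc : (v - vs) ⬝ᵥ (v - vs) ≤ c := le_mul_of_one_le_left (dotProduct_star_self_nonneg _)
    (hW ▸ one_le_sq_one_div_sqrt_one_sub (dotProduct_star_self_nonneg v) hv)
  obtain rfl : G = SourceMatrix.G vs := hG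
  obtain rfl : H = SourceMatrix.H v vs := hH
  obtain rfl : b1 = SourceMatrix.b₁ v vs := hb1
  obtain rfl : b2 = SourceMatrix.b₂ v vs := hb2
  obtain rfl : A3 = SourceMatrix.A₃ (SourceMatrix.G vs) (SourceMatrix.H v vs) c := hA3
  obtain rfl : A2 = SourceMatrix.A₂ (SourceMatrix.b₁ v vs) (SourceMatrix.b₂ v vs) := hA2
  have h₃ := SourceMatrix.A₃_isSymm (SourceMatrix.G_isSymm vs) (SourceMatrix.H_isSymm v vs) c
  have h₂ := SourceMatrix.A₂_isSymm (SourceMatrix.b₁ v vs) (SourceMatrix.b₂ v vs)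
  constructor
  · refine .of_dotProduct_mulVec_nonneg (isHermitian_iff_isSymm.2 (h₃.add h₂)) fun x => ?_
    rw [star_trivial, add_mulVec, dotProduct_add, SourceMatrix.dotProduct_A₃_mulVec,
      SourceMatrix.dotProduct_A₂_mulVec]
    exact SourceMatrix.quadForm_nonneg hvs.le hc _ _ (x 6)
  · refine .of_dotProduct_mulVec_nonneg (isHermitian_iff_isSymm.2 (h₃.sub h₂)) fun x => ?_
    rw [star_trivial, sub_mulVec, dotProduct_sub, SourceMatrix.dotProduct_A₃_mulVec,
      SourceMatrix.dotProduct_A₂_mulVec]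
    linear_combination
      SourceMatrix.quadForm_nonneg hvs.le hc ![x 0, x 1, x 2] ![x 3, x 4, x 5] (-x 6)
end

section
/- Let v, v* ∈ R^3 with |v| < 1 and |v*| < 1, let B, B* ∈ R^3, and let ρ, H > 0 and W = 1/√(1-|v|²). Define Π₂ = √(ρH) (v - v*) · ((1-|v|²)B + (v·B)v - (1-|v*|²)B* - (v*·B*)v*) and Π₃ = (1/2)ρHW²|v-v*|² + ((1-|v*|²)|B-B*|²)/2 + (|v-v*|²|B|²)/2 - (((v-v*)·B)²)/2 + ((v*·(B-B*))²)/2. Then |Π₂| ≤ Π₃. -/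
set_option maxHeartbeats 1000000 in
/-- Cauchy–Schwarz in dimension 7, via the Lagrange identity. -/
lemma stmt14_cauchy7 (x1 x2 x3 x4 x5 x6 x7 y1 y2 y3 y4 y5 y6 y7 : ℝ) :
    (x1*y1 + x2*y2 + x3*y3 + x4*y4 + x5*y5 + x6*y6 + x7*y7)^2
      ≤ (x1^2 + x2^2 + x3^2 + x4^2 + x5^2 + x6^2 + x7^2)
        * (y1^2 + y2^2 + y3^2 + y4^2 + y5^2 + y6^2 + y7^2) := by
  have h : (x1^2 + x2^2 + x3^2 + x4^2 + x5^2 + x6^2 + x7^2)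
        * (y1^2 + y2^2 + y3^2 + y4^2 + y5^2 + y6^2 + y7^2)
      - (x1*y1 + x2*y2 + x3*y3 + x4*y4 + x5*y5 + x6*y6 + x7*y7)^2
    = (x1*y2 - x2*y1)^2 + (x1*y3 - x3*y1)^2 + (x1*y4 - x4*y1)^2
      + (x1*y5 - x5*y1)^2 + (x1*y6 - x6*y1)^2 + (x1*y7 - x7*y1)^2
      + (x2*y3 - x3*y2)^2 + (x2*y4 - x4*y2)^2 + (x2*y5 - x5*y2)^2
      + (x2*y6 - x6*y2)^2 + (x2*y7 - x7*y2)^2 + (x3*y4 - x4*y3)^2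
      + (x3*y5 - x5*y3)^2 + (x3*y6 - x6*y3)^2 + (x3*y7 - x7*y3)^2
      + (x4*y5 - x5*y4)^2 + (x4*y6 - x6*y4)^2 + (x4*y7 - x7*y4)^2
      + (x5*y6 - x6*y5)^2 + (x5*y7 - x7*y5)^2 + (x6*y7 - x7*y6)^2 := by ring
  linarith [sq_nonneg (x1*y2 - x2*y1), sq_nonneg (x1*y3 - x3*y1), sq_nonneg (x1*y4 - x4*y1),
    sq_nonneg (x1*y5 - x5*y1), sq_nonneg (x1*y6 - x6*y1), sq_nonneg (x1*y7 - x7*y1),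
    sq_nonneg (x2*y3 - x3*y2), sq_nonneg (x2*y4 - x4*y2), sq_nonneg (x2*y5 - x5*y2),
    sq_nonneg (x2*y6 - x6*y2), sq_nonneg (x2*y7 - x7*y2), sq_nonneg (x3*y4 - x4*y3),
    sq_nonneg (x3*y5 - x5*y3), sq_nonneg (x3*y6 - x6*y3), sq_nonneg (x3*y7 - x7*y3),
    sq_nonneg (x4*y5 - x5*y4), sq_nonneg (x4*y6 - x6*y4), sq_nonneg (x4*y7 - x7*y4),
    sq_nonneg (x5*y6 - x6*y5), sq_nonneg (x5*y7 - x7*y5), sq_nonneg (x6*y7 - x7*y6), h]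

lemma stmt14_aux1 (s W D2 G L : ℝ) (hW2ge1 : 1 ≤ W^2) (hG0 : 0 ≤ G) (hD20 : 0 ≤ D2)
    (key : L^2 ≤ D2 * G) : (s * L)^2 ≤ (s^2 * W^2 * D2) * G := by
  have h2 : s^2 * L^2 ≤ s^2 * (D2 * G) :=
    mul_le_mul_of_nonneg_left key (sq_nonneg s)
  nlinarith [mul_nonneg (mul_nonneg (sq_nonneg s) hD20) hG0, hW2ge1]

lemma stmt14_aux2 (P G A : ℝ) (h1 : A^2 ≤ P * G) (hA : 0 ≤ A) (hG0 : 0 ≤ G) (hP0 : 0 ≤ P) :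
    A ≤ (P + G) / 2 := by
  nlinarith [sq_nonneg (P - G)]

set_option maxHeartbeats 2000000 in
/-- Core quadratic-form inequality `|Π₂| ≤ Π₃` from the proof of Lemma 3.4:
with `Π₂ = √(ρH) (v-v*)·((1-|v|²)B + (v·B)v - (1-|v*|²)B* - (v*·B*)v*)` and
`Π₃ = (1/2)ρHW²|v-v*|² + ((1-|v*|²)|B-B*|²)/2 + (|v-v*|²|B|²)/2
      - (((v-v*)·B)²)/2 + ((v*·(B-B*))²)/2`. -/
theorem stmt14 (v vs B Bs : Fin 3 → ℝ)
    (hv : Real.sqrt (∑ i, v i ^ 2) < 1) (hvs : Real.sqrt (∑ i, vs i ^ 2) < 1)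
    (ρ H : ℝ) (hρ : 0 < ρ) (hH : 0 < H)
    (W : ℝ) (hW : W = 1 / Real.sqrt (1 - ∑ i, v i ^ 2)) :
    |Real.sqrt (ρ * H) * ∑ i, (v i - vs i) *
        ((1 - ∑ k, v k ^ 2) * B i + (∑ k, v k * B k) * v i
          - (1 - ∑ k, vs k ^ 2) * Bs i - (∑ k, vs k * Bs k) * vs i)|
      ≤ (1 / 2) * ρ * H * W ^ 2 * (∑ i, (v i - vs i) ^ 2)
        + (1 - ∑ i, vs i ^ 2) * (∑ i, (B i - Bs i) ^ 2) / 2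
        + (∑ i, (v i - vs i) ^ 2) * (∑ i, B i ^ 2) / 2
        - (∑ i, (v i - vs i) * B i) ^ 2 / 2
        + (∑ i, vs i * (B i - Bs i)) ^ 2 / 2 := by
  have ha0 : (0:ℝ) ≤ ∑ i, v i ^ 2 := Finset.sum_nonneg fun i _ => sq_nonneg _
  have hb0 : (0:ℝ) ≤ ∑ i, vs i ^ 2 := Finset.sum_nonneg fun i _ => sq_nonneg _
  have ha1 : (∑ i, v i ^ 2) < 1 := by
    nlinarith [Real.sq_sqrt ha0, Real.sqrt_nonneg (∑ i, v i ^ 2)]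
  have hb1 : (∑ i, vs i ^ 2) < 1 := by
    nlinarith [Real.sq_sqrt hb0, Real.sqrt_nonneg (∑ i, vs i ^ 2)]
  have hW2 : W ^ 2 = 1 / (1 - ∑ i, v i ^ 2) := by
    rw [hW, div_pow, one_pow, Real.sq_sqrt (by linarith)]
  have hW2ge1 : 1 ≤ W ^ 2 := by
    rw [hW2, le_div_iff₀ (by linarith)]; linarith
  set s := Real.sqrt (ρ * H) with hsdef
  have hs2 : s ^ 2 = ρ * H := Real.sq_sqrt (by positivity)
  have hs0 : 0 ≤ s := Real.sqrt_nonneg _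
  set t := Real.sqrt (1 - ∑ i, vs i ^ 2) with htdef
  have ht2 : t ^ 2 = 1 - ∑ i, vs i ^ 2 := Real.sq_sqrt (by linarith)
  simp only [Fin.sum_univ_three] at ha0 hb0 ha1 hb1 hW2 ht2 ⊢
  set v0 := v 0; set v1 := v 1; set v2 := v 2
  set w0 := vs 0; set w1 := vs 1; set w2 := vs 2
  set B0 := B 0; set B1 := B 1; set B2 := B 2
  set C0 := Bs 0; set C1 := Bs 1; set C2 := Bs 2
  -- differences
  set d0 := v0 - w0 with hd0; set d1 := v1 - w1 with hd1; set d2 := v2 - w2 with hd2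
  set E0 := B0 - C0 with hE0; set E1 := B1 - C1 with hE1; set E2 := B2 - C2 with hE2
  -- scalar abbreviations
  set L := d0 * ((1 - (v0^2 + v1^2 + v2^2)) * B0 + (v0*B0 + v1*B1 + v2*B2) * v0
        - (1 - (w0^2 + w1^2 + w2^2)) * C0 - (w0*C0 + w1*C1 + w2*C2) * w0)
      + d1 * ((1 - (v0^2 + v1^2 + v2^2)) * B1 + (v0*B0 + v1*B1 + v2*B2) * v1
        - (1 - (w0^2 + w1^2 + w2^2)) * C1 - (w0*C0 + w1*C1 + w2*C2) * w1)
      + d2 * ((1 - (v0^2 + v1^2 + v2^2)) * B2 + (v0*B0 + v1*B1 + v2*B2) * v2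
        - (1 - (w0^2 + w1^2 + w2^2)) * C2 - (w0*C0 + w1*C1 + w2*C2) * w2) with hL
  set D2 := d0^2 + d1^2 + d2^2 with hD2d
  set G := (1 - (w0^2 + w1^2 + w2^2)) * (E0^2 + E1^2 + E2^2)
      + D2 * (B0^2 + B1^2 + B2^2) - (d0*B0 + d1*B1 + d2*B2)^2
      + (w0*E0 + w1*E1 + w2*E2)^2 with hGd
  clear_value L
  clear hv hvs hW
  clear_value v0 v1 v2 w0 w1 w2 B0 B1 B2 C0 C1 C2 d0 d1 d2 E0 E1 E2 D2 G s t
  -- Cauchy–Schwarz in ℝ⁷ with X = (d×vs, t·d, d·vs), Y = (d×B, t·E, vs·E)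
  have key := stmt14_cauchy7 (d1*w2 - d2*w1) (d2*w0 - d0*w2) (d0*w1 - d1*w0)
      (t*d0) (t*d1) (t*d2) (d0*w0 + d1*w1 + d2*w2)
      (d1*B2 - d2*B1) (d2*B0 - d0*B2) (d0*B1 - d1*B0)
      (t*E0) (t*E1) (t*E2) (w0*E0 + w1*E1 + w2*E2)
  have exy : (d1*w2 - d2*w1)*(d1*B2 - d2*B1) + (d2*w0 - d0*w2)*(d2*B0 - d0*B2)
      + (d0*w1 - d1*w0)*(d0*B1 - d1*B0) + (t*d0)*(t*E0) + (t*d1)*(t*E1) + (t*d2)*(t*E2)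
      + (d0*w0 + d1*w1 + d2*w2)*(w0*E0 + w1*E1 + w2*E2) = L := by
    rw [hL, hd0, hd1, hd2, hE0, hE1, hE2]
    linear_combination ((v0 - w0)*(B0 - C0) + (v1 - w1)*(B1 - C1) + (v2 - w2)*(B2 - C2)) * ht2
  have ex : (d1*w2 - d2*w1)^2 + (d2*w0 - d0*w2)^2 + (d0*w1 - d1*w0)^2
      + (t*d0)^2 + (t*d1)^2 + (t*d2)^2 + (d0*w0 + d1*w1 + d2*w2)^2 = D2 := by
    rw [hD2d, hd0, hd1, hd2]
    linear_combination ((v0 - w0)^2 + (v1 - w1)^2 + (v2 - w2)^2) * ht2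
  have ey : (d1*B2 - d2*B1)^2 + (d2*B0 - d0*B2)^2 + (d0*B1 - d1*B0)^2
      + (t*E0)^2 + (t*E1)^2 + (t*E2)^2 + (w0*E0 + w1*E1 + w2*E2)^2 = G := by
    rw [hGd, hD2d, hd0, hd1, hd2, hE0, hE1, hE2]
    linear_combination ((B0 - C0)^2 + (B1 - C1)^2 + (B2 - C2)^2) * ht2
  rw [exy, ex, ey] at key
  -- nonnegativity
  have hG0 : 0 ≤ G := by rw [← ey]; positivity
  have hD20 : 0 ≤ D2 := by rw [hD2d]; positivity
  -- main estimate
  have h1 : (s * L)^2 ≤ (s^2 * W^2 * D2) * G :=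
    stmt14_aux1 s W D2 G L hW2ge1 hG0 hD20 key
  have hP0 : 0 ≤ s^2 * W^2 * D2 := by positivity
  have habs : |s * L| ≤ (s^2 * W^2 * D2 + G) / 2 := by
    refine stmt14_aux2 _ _ _ ?_ (abs_nonneg _) hG0 hP0
    rw [sq_abs]; exact h1
  calc |s * L| ≤ (s^2 * W^2 * D2 + G) / 2 := habs
    _ = 1 / 2 * ρ * H * W ^ 2 * D2
        + (1 - (w0^2 + w1^2 + w2^2)) * (E0^2 + E1^2 + E2^2) / 2
        + D2 * (B0^2 + B1^2 + B2^2) / 2 - (d0*B0 + d1*B1 + d2*B2)^2 / 2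
        + (w0*E0 + w1*E1 + w2*E2)^2 / 2 := by
      rw [hGd]; linear_combination (W^2 * D2 / 2) * hs2
end

section
/- Let v ∈ R^3 with |v| < 1 and ρ, p, H > 0 with H ≥ √(1+p²/ρ²) + p/ρ. Set W = 1/√(1-|v|²) and let B ∈ R^3. Define D = ρW, m = (ρHW² + |B|²)v - (v·B)B, E = ρHW² - p - ((1-|v|²)|B|² + (v·B)²)/2 + |B|², S = (0, (1-|v|²)B + (v·B)v, v, v·B)ᵀ ∈ R^8, and U = (D, m, B, E)ᵀ ∈ R^8. Then for all B* ∈ R^3 and all v* ∈ R^3 with |v*| < 1, defining ξ* = (-√(1-|v*|²), -v*, -(1-|v*|²)B* - (v*·B*)v*, 1)ᵀ and p*_m = ((1-|v*|²)|B*|² + (v*·B*)²)/2, it holds that |S·ξ* + v*·B*| ≤ (U·ξ* + p*_m)/√(ρH). -/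
set_option maxHeartbeats 4000000


/-- `ξ* = (-√(1-|v*|²), -v*, -(1-|v*|²)B* - (v*·B*)v*, 1)ᵀ ∈ ℝ⁸`. -/
noncomputable def xiStar (vStar BStar : Fin 3 → ℝ) : Fin 8 → ℝ :=
  ![-Real.sqrt (1 - ∑ i, vStar i ^ 2),
    -vStar 0, -vStar 1, -vStar 2,
    -((1 - ∑ i, vStar i ^ 2) * BStar 0 + (∑ i, vStar i * BStar i) * vStar 0),
    -((1 - ∑ i, vStar i ^ 2) * BStar 1 + (∑ i, vStar i * BStar i) * vStar 1),
    -((1 - ∑ i, vStar i ^ 2) * BStar 2 + (∑ i, vStar i * BStar i) * vStar 2),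
    1]

/-- `p*_m = ((1-|v*|²)|B*|² + (v*·B*)²)/2`. -/
noncomputable def pmStar (vStar BStar : Fin 3 → ℝ) : ℝ :=
  ((1 - ∑ i, vStar i ^ 2) * (∑ i, BStar i ^ 2) + (∑ i, vStar i * BStar i) ^ 2) / 2


theorem cs7 (a1 a2 a3 a4 a5 a6 a7 b1 b2 b3 b4 b5 b6 b7 : ℝ) :
    (a1*b1 + a2*b2 + a3*b3 + a4*b4 + a5*b5 + a6*b6 + a7*b7)^2 ≤
    (a1^2+a2^2+a3^2+a4^2+a5^2+a6^2+a7^2) * (b1^2+b2^2+b3^2+b4^2+b5^2+b6^2+b7^2) := by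
  have key : (a1^2+a2^2+a3^2+a4^2+a5^2+a6^2+a7^2) * (b1^2+b2^2+b3^2+b4^2+b5^2+b6^2+b7^2)
      - (a1*b1 + a2*b2 + a3*b3 + a4*b4 + a5*b5 + a6*b6 + a7*b7)^2 =
      (a1*b2-a2*b1)^2 + (a1*b3-a3*b1)^2 + (a1*b4-a4*b1)^2 + (a1*b5-a5*b1)^2
      + (a1*b6-a6*b1)^2 + (a1*b7-a7*b1)^2 + (a2*b3-a3*b2)^2 + (a2*b4-a4*b2)^2
      + (a2*b5-a5*b2)^2 + (a2*b6-a6*b2)^2 + (a2*b7-a7*b2)^2 + (a3*b4-a4*b3)^2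
      + (a3*b5-a5*b3)^2 + (a3*b6-a6*b3)^2 + (a3*b7-a7*b3)^2 + (a4*b5-a5*b4)^2
      + (a4*b6-a6*b4)^2 + (a4*b7-a7*b4)^2 + (a5*b6-a6*b5)^2 + (a5*b7-a7*b5)^2
      + (a6*b7-a7*b6)^2 := by ring
  linarith [key, sq_nonneg (a1*b2-a2*b1), sq_nonneg (a1*b3-a3*b1), sq_nonneg (a1*b4-a4*b1),
    sq_nonneg (a1*b5-a5*b1), sq_nonneg (a1*b6-a6*b1), sq_nonneg (a1*b7-a7*b1),
    sq_nonneg (a2*b3-a3*b2), sq_nonneg (a2*b4-a4*b2), sq_nonneg (a2*b5-a5*b2),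
    sq_nonneg (a2*b6-a6*b2), sq_nonneg (a2*b7-a7*b2), sq_nonneg (a3*b4-a4*b3),
    sq_nonneg (a3*b5-a5*b3), sq_nonneg (a3*b6-a6*b3), sq_nonneg (a3*b7-a7*b3),
    sq_nonneg (a4*b5-a5*b4), sq_nonneg (a4*b6-a6*b4), sq_nonneg (a4*b7-a7*b4),
    sq_nonneg (a5*b6-a6*b5), sq_nonneg (a5*b7-a7*b5), sq_nonneg (a6*b7-a7*b6)]

theorem csdiv (s L A R2 : ℝ) (hs : s < 1)
    (h : ((1-s)*L)^2 ≤ ((1-s)^2*A)*R2) : L^2 ≤ A*R2 := by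
  have h2 : (0:ℝ) < (1-s)^2 := pow_pos (by linarith) 2
  have h3 : (1-s)^2 * (L^2) ≤ (1-s)^2 * (A*R2) := by
    calc (1-s)^2 * (L^2) = ((1-s)*L)^2 := by ring
      _ ≤ ((1-s)^2*A)*R2 := h
      _ = (1-s)^2 * (A*R2) := by ring
  exact le_of_mul_le_mul_left h3 h2

theorem amgm (L A R2 k sk : ℝ) (hL2 : L^2 ≤ A*R2) (hsk2 : sk^2 = k) (hsk0 : 0 ≤ sk)
    (hA : 0 ≤ A) (hR : 0 ≤ R2) (hk : 0 ≤ k) : |L| * sk ≤ (k*A + R2)/2 := by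
  have hX2 : (|L| * sk)^2 = k*(L^2) := by rw [mul_pow, sq_abs, hsk2]; ring
  have h1 : (|L| * sk)^2 ≤ (k*A)*R2 := by
    rw [hX2]
    calc k*(L^2) ≤ k*(A*R2) := mul_le_mul_of_nonneg_left hL2 hk
      _ = (k*A)*R2 := by ring
  have hXnn : 0 ≤ |L| * sk := mul_nonneg (abs_nonneg L) hsk0
  have hYnn : 0 ≤ (k*A + R2)/2 := by
    have := mul_nonneg hk hA
    linarith
  have hsq : (|L| * sk)^2 ≤ ((k*A + R2)/2)^2 := by nlinarith [h1, sq_nonneg (k*A - R2)]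
  calc |L| * sk = Real.sqrt ((|L| * sk)^2) := (Real.sqrt_sq hXnn).symm
    _ ≤ Real.sqrt (((k*A + R2)/2)^2) := Real.sqrt_le_sqrt hsq
    _ = (k*A + R2)/2 := Real.sqrt_sq hYnn

theorem core (a s t W σ r ρ p k : ℝ) (hρ : 0 < ρ) (hp : 0 < p)
    (hW2 : W^2*(1-a) = 1) (hσ2 : σ^2 = 1-s) (hσ0 : 0 ≤ σ) (ha0 : 0 ≤ a) (hslt : s < 1)
    (hA0 : 0 ≤ a + s - 2*t) (hr0 : 0 ≤ r) (hr2 : r^2 = ρ^2+p^2) (hkr : r + p ≤ k) :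
    k*(a+s-2*t) + 2*ρ*(W*σ) + 2*p ≤ 2*k*(W^2*(1-t)) := by
  have hM0 : 0 ≤ a*W^2*(1+a-2*t) :=
    mul_nonneg (mul_nonneg ha0 (sq_nonneg W)) (by linarith)
  have hfact : 1 + a*W^2*(1+a-2*t) - s = W^2*(1-s) + a*W^2*(a+s-2*t) := by
    linear_combination (s-1)*hW2
  have h4eq : (r*((2-s)+a*W^2*(1+a-2*t)))^2
      = (2*ρ*(W*σ) - p*(a*W^2*(1+a-2*t)-s))^2
        + (ρ*(a*W^2*(1+a-2*t)-s) + 2*p*(W*σ))^2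
        + 4*(ρ^2+p^2)*(a*W^2*(a+s-2*t)) := by
    linear_combination ((2-s)+a*W^2*(1+a-2*t))^2*hr2 + (4*(ρ^2+p^2))*hfact
      - (4*(ρ^2+p^2)*W^2)*hσ2
  have hJnn : 0 ≤ (2-s)+a*W^2*(1+a-2*t) := by linarith
  have hterm4 : 0 ≤ 4*(ρ^2+p^2)*(a*W^2*(a+s-2*t)) :=
    mul_nonneg (by positivity) (mul_nonneg (mul_nonneg ha0 (sq_nonneg W)) hA0)
  have hXnn2 : 0 ≤ r*((2-s)+a*W^2*(1+a-2*t)) := mul_nonneg hr0 hJnn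
  have hCS2 : 0 ≤ r*((2-s)+a*W^2*(1+a-2*t)) + p*(a*W^2*(1+a-2*t)-s) - 2*ρ*(W*σ) := by
    nlinarith [h4eq, hXnn2, hterm4, sq_nonneg (ρ*(a*W^2*(1+a-2*t)-s) + 2*p*(W*σ))]
  have hJid2 : 2*k*(W^2*(1-t)) = k*(a+s-2*t) + k*((2-s)+a*W^2*(1+a-2*t)) := by
    linear_combination (k*(a+2-2*t))*hW2
  have hkJ : (r+p)*((2-s)+a*W^2*(1+a-2*t)) ≤ k*((2-s)+a*W^2*(1+a-2*t)) :=
    mul_le_mul_of_nonneg_right hkr hJnn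
  nlinarith [hJid2, hkJ, hCS2]

theorem final_combine (X kA R2 Q P C Y : ℝ) (h1 : X ≤ (kA + R2)/2)
    (h2 : kA + Q + P ≤ C) (hY : Y = (C - Q - P + R2)/2) : X ≤ Y := by linarith

/-- Lemma 3.4 (source-term estimate) in primitive variables: with
`D = ρW`, `m = (ρHW²+|B|²)v - (v·B)B`, `E = ρHW² - p - ((1-|v|²)|B|²+(v·B)²)/2 + |B|²`,
`S = (0, (1-|v|²)B + (v·B)v, v, v·B)ᵀ`, `U = (D,m,B,E)ᵀ ∈ ℝ⁸`, for all `B* ∈ ℝ³`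
and all `v*` with `|v*| < 1` one has `|S·ξ* + v*·B*| ≤ (U·ξ* + p*_m)/√(ρH)`. -/
theorem stmt15 (v : Fin 3 → ℝ) (hv : Real.sqrt (∑ i, v i ^ 2) < 1)
    (ρ p H : ℝ) (hρ : 0 < ρ) (hp : 0 < p) (hHpos : 0 < H)
    (hH : H ≥ Real.sqrt (1 + p ^ 2 / ρ ^ 2) + p / ρ)
    (W : ℝ) (hW : W = 1 / Real.sqrt (1 - ∑ i, v i ^ 2))
    (B : Fin 3 → ℝ)
    (S U : Fin 8 → ℝ)
    (hS : S = ![0,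
        (1 - ∑ i, v i ^ 2) * B 0 + (∑ i, v i * B i) * v 0,
        (1 - ∑ i, v i ^ 2) * B 1 + (∑ i, v i * B i) * v 1,
        (1 - ∑ i, v i ^ 2) * B 2 + (∑ i, v i * B i) * v 2,
        v 0, v 1, v 2, ∑ i, v i * B i])
    (hU : U = ![ρ * W,
        (ρ * H * W ^ 2 + ∑ i, B i ^ 2) * v 0 - (∑ i, v i * B i) * B 0,
        (ρ * H * W ^ 2 + ∑ i, B i ^ 2) * v 1 - (∑ i, v i * B i) * B 1,
        (ρ * H * W ^ 2 + ∑ i, B i ^ 2) * v 2 - (∑ i, v i * B i) * B 2,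
        B 0, B 1, B 2,
        ρ * H * W ^ 2 - p
          - ((1 - ∑ i, v i ^ 2) * (∑ i, B i ^ 2) + (∑ i, v i * B i) ^ 2) / 2
          + ∑ i, B i ^ 2]) :
    ∀ BStar vStar : Fin 3 → ℝ, Real.sqrt (∑ i, vStar i ^ 2) < 1 →
      |(∑ j, S j * xiStar vStar BStar j) + ∑ i, vStar i * BStar i|
        ≤ ((∑ j, U j * xiStar vStar BStar j) + pmStar vStar BStar) / Real.sqrt (ρ * H) := by
  
  intro BStar vStar hvs
  have hs0 : (0:ℝ) ≤ (vStar 0 ^ 2 + vStar 1 ^ 2 + vStar 2 ^ 2) := by positivity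
  have ha0 : (0:ℝ) ≤ (v 0 ^ 2 + v 1 ^ 2 + v 2 ^ 2) := by positivity
  simp only [Fin.sum_univ_three] at hv hvs hW
  have hslt : (vStar 0 ^ 2 + vStar 1 ^ 2 + vStar 2 ^ 2) < 1 := by
    nlinarith [Real.sq_sqrt hs0, Real.sqrt_nonneg ((vStar 0 ^ 2 + vStar 1 ^ 2 + vStar 2 ^ 2)), hvs]
  have halt : (v 0 ^ 2 + v 1 ^ 2 + v 2 ^ 2) < 1 := by
    nlinarith [Real.sq_sqrt ha0, Real.sqrt_nonneg ((v 0 ^ 2 + v 1 ^ 2 + v 2 ^ 2)), hv]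
  have h1a : (0:ℝ) < 1 - (v 0 ^ 2 + v 1 ^ 2 + v 2 ^ 2) := by linarith
  have h1s : (0:ℝ) < 1 - (vStar 0 ^ 2 + vStar 1 ^ 2 + vStar 2 ^ 2) := by linarith
  have hW2 : W ^ 2 * (1 - (v 0 ^ 2 + v 1 ^ 2 + v 2 ^ 2)) = 1 := by
    rw [hW, div_pow, one_pow, Real.sq_sqrt h1a.le]
    field_simp
  have hWpos : 0 < W := by
    rw [hW]; exact div_pos one_pos (Real.sqrt_pos.mpr h1a)
  have hsg0 : (0:ℝ) ≤ Real.sqrt (1 - (vStar 0 ^ 2 + vStar 1 ^ 2 + vStar 2 ^ 2)) := Real.sqrt_nonneg _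
  have hsg2 : (Real.sqrt (1 - (vStar 0 ^ 2 + vStar 1 ^ 2 + vStar 2 ^ 2))) ^ 2 = 1 - (vStar 0 ^ 2 + vStar 1 ^ 2 + vStar 2 ^ 2) := Real.sq_sqrt h1s.le
  have hr0 : (0:ℝ) ≤ Real.sqrt (ρ ^ 2 + p ^ 2) := Real.sqrt_nonneg _
  have hr2 : (Real.sqrt (ρ ^ 2 + p ^ 2)) ^ 2 = ρ ^ 2 + p ^ 2 := Real.sq_sqrt (by positivity)
  have hsk0 : (0:ℝ) < Real.sqrt (ρ * H) := Real.sqrt_pos.mpr (by positivity)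
  have hsk2 : (Real.sqrt (ρ * H)) ^ 2 = ρ * H := Real.sq_sqrt (by positivity)
  have e1 : Real.sqrt (1 + p ^ 2 / ρ ^ 2) = (Real.sqrt (ρ ^ 2 + p ^ 2)) / ρ := by
    rw [show (1 : ℝ) + p ^ 2 / ρ ^ 2 = (ρ ^ 2 + p ^ 2) / ρ ^ 2 by field_simp,
      Real.sqrt_div (by positivity), Real.sqrt_sq hρ.le]
  have hkr : (Real.sqrt (ρ ^ 2 + p ^ 2)) + p ≤ ρ * H := by
    have h := mul_le_mul_of_nonneg_left hH.le hρ.le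
    rw [e1, mul_add, mul_div_cancel₀ _ (ne_of_gt hρ), mul_div_cancel₀ _ (ne_of_gt hρ)] at h
    linarith
  have hgoalL : (∑ j, S j * xiStar vStar BStar j) + ∑ i, vStar i * BStar i
      = (((1 - (vStar 0 ^ 2 + vStar 1 ^ 2 + vStar 2 ^ 2)) * v 0 - (1 - (v 0 * vStar 0 + v 1 * vStar 1 + v 2 * vStar 2)) * vStar 0) * (B 0 - BStar 0) + ((1 - (vStar 0 ^ 2 + vStar 1 ^ 2 + vStar 2 ^ 2)) * v 1 - (1 - (v 0 * vStar 0 + v 1 * vStar 1 + v 2 * vStar 2)) * vStar 1) * (B 1 - BStar 1) + ((1 - (vStar 0 ^ 2 + vStar 1 ^ 2 + vStar 2 ^ 2)) * v 2 - (1 - (v 0 * vStar 0 + v 1 * vStar 1 + v 2 * vStar 2)) * vStar 2) * (B 2 - BStar 2) + (v 1 * vStar 2 - v 2 * vStar 1) * ((v 1 - vStar 1) * B 2 - (v 2 - vStar 2) * B 1) + (v 2 * vStar 0 - v 0 * vStar 2) * ((v 2 - vStar 2) * B 0 - (v 0 - vStar 0) * B 2) + (v 0 * vStar 1 - v 1 *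 vStar 0) * ((v 0 - vStar 0) * B 1 - (v 1 - vStar 1) * B 0)) := by
    subst hS
    simp only [xiStar]
    simp only [Fin.sum_univ_three]
    simp only [Fin.sum_univ_succ, Fin.sum_univ_zero, Matrix.cons_val_zero,
      Matrix.cons_val_succ, add_zero]
    ring
  have hgoalR : (∑ j, U j * xiStar vStar BStar j) + pmStar vStar BStar
      = (ρ * H * W ^ 2 * (1 - (v 0 * vStar 0 + v 1 * vStar 1 + v 2 * vStar 2)) - ρ * W * (Real.sqrt (1 - (vStar 0 ^ 2 + vStar 1 ^ 2 + vStar 2 ^ 2))) - p + (((1 - (vStar 0 ^ 2 + vStar 1 ^ 2 + vStar 2 ^ 2)) * ((B 0 - BStar 0) ^ 2 + (B 1 - BStar 1) ^ 2 + (B 2 - BStar 2) ^ 2) + (((v 1 - vStar 1) * B 2 - (v 2 - vStar 2) * B 1) ^ 2 + ((v 2 - vStar 2) * B 0 - (v 0 - vStar 0) * B 2) ^ 2 + ((v 0 - vStar 0) * B 1 - (v 1 - vStar 1) * B 0) ^ 2) + (vStar 0 * (B 0 - BStar 0) + vStar 1 * (B 1 - BStar 1) + vStar 2 * (B 2 -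 BStar 2)) ^ 2) / 2)) := by
    subst hU
    simp only [xiStar, pmStar]
    simp only [Fin.sum_univ_three]
    simp only [Fin.sum_univ_succ, Fin.sum_univ_zero, Matrix.cons_val_zero,
      Matrix.cons_val_succ, add_zero]
    ring
  have hA0 : (0:ℝ) ≤ ((v 0 ^ 2 + v 1 ^ 2 + v 2 ^ 2) + (vStar 0 ^ 2 + vStar 1 ^ 2 + vStar 2 ^ 2) - 2 * (v 0 * vStar 0 + v 1 * vStar 1 + v 2 * vStar 2)) := by
    nlinarith [sq_nonneg (v 0 - vStar 0), sq_nonneg (v 1 - vStar 1), sq_nonneg (v 2 - vStar 2)]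
  have hRmag0 : (0:ℝ) ≤ 2 * (((1 - (vStar 0 ^ 2 + vStar 1 ^ 2 + vStar 2 ^ 2)) * ((B 0 - BStar 0) ^ 2 + (B 1 - BStar 1) ^ 2 + (B 2 - BStar 2) ^ 2) + (((v 1 - vStar 1) * B 2 - (v 2 - vStar 2) * B 1) ^ 2 + ((v 2 - vStar 2) * B 0 - (v 0 - vStar 0) * B 2) ^ 2 + ((v 0 - vStar 0) * B 1 - (v 1 - vStar 1) * B 0) ^ 2) + (vStar 0 * (B 0 - BStar 0) + vStar 1 * (B 1 - BStar 1) + vStar 2 * (B 2 - BStar 2)) ^ 2) / 2) := by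
    have hz : (0:ℝ) ≤ ((B 0 - BStar 0) ^ 2 + (B 1 - BStar 1) ^ 2 + (B 2 - BStar 2) ^ 2) := by positivity
    linarith [mul_nonneg h1s.le hz, sq_nonneg ((v 1 - vStar 1) * B 2 - (v 2 - vStar 2) * B 1), sq_nonneg ((v 2 - vStar 2) * B 0 - (v 0 - vStar 0) * B 2), sq_nonneg ((v 0 - vStar 0) * B 1 - (v 1 - vStar 1) * B 0),
      sq_nonneg (vStar 0 * (B 0 - BStar 0) + vStar 1 * (B 1 - BStar 1) + vStar 2 * (B 2 - BStar 2))]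
  have hcs := cs7 ((Real.sqrt (1 - (vStar 0 ^ 2 + vStar 1 ^ 2 + vStar 2 ^ 2))) * (((1 - (vStar 0 ^ 2 + vStar 1 ^ 2 + vStar 2 ^ 2)) * v 0 - (1 - (v 0 * vStar 0 + v 1 * vStar 1 + v 2 * vStar 2)) * vStar 0) - ((v 0 * vStar 0 + v 1 * vStar 1 + v 2 * vStar 2) - (vStar 0 ^ 2 + vStar 1 ^ 2 + vStar 2 ^ 2)) * vStar 0)) ((Real.sqrt (1 - (vStar 0 ^ 2 + vStar 1 ^ 2 + vStar 2 ^ 2))) * (((1 - (vStar 0 ^ 2 + vStar 1 ^ 2 + vStar 2 ^ 2)) * v 1 - (1 - (v 0 * vStar 0 + v 1 * vStar 1 + v 2 * vStar 2)) * vStar 1) - ((v 0 * vStar 0 + v 1 * vStar 1 + v 2 * vStar 2) - (vStar 0 ^ 2 + vStar 1 ^ 2 + vStar 2 ^ 2)) * vStar 1)) ((Real.sqrt (1 - (vStar 0 ^ 2 + vStar 1 ^ 2 + vStar 2 ^ 2))) * (((1 - (vStar 0 ^ 2 + vStar 1 ^ 2 + vStar 2 ^ 2)) * v 2 - (1 -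 (v 0 * vStar 0 + v 1 * vStar 1 + v 2 * vStar 2)) * vStar 2) - ((v 0 * vStar 0 + v 1 * vStar 1 + v 2 * vStar 2) - (vStar 0 ^ 2 + vStar 1 ^ 2 + vStar 2 ^ 2)) * vStar 2)) ((1 - (vStar 0 ^ 2 + vStar 1 ^ 2 + vStar 2 ^ 2)) * (v 1 * vStar 2 - v 2 * vStar 1)) ((1 - (vStar 0 ^ 2 + vStar 1 ^ 2 + vStar 2 ^ 2)) * (v 2 * vStar 0 - v 0 * vStar 2)) ((1 - (vStar 0 ^ 2 + vStar 1 ^ 2 + vStar 2 ^ 2)) * (v 0 * vStar 1 - v 1 * vStar 0)) (((v 0 * vStar 0 + v 1 * vStar 1 + v 2 * vStar 2) - (vStar 0 ^ 2 + vStar 1 ^ 2 + vStar 2 ^ 2)) * (1 - (vStar 0 ^ 2 + vStar 1 ^ 2 + vStar 2 ^ 2))) ((Real.sqrt (1 - (vStar 0 ^ 2 + vStar 1 ^ 2 + vStar 2 ^ 2))) * (B 0 - BStar 0)) ((Real.sqrt (1 - (vStar 0 ^ 2 + vStar 1 ^ 2 + vStar 2 ^ 2))) * (B 1 - BStar 1))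 ((Real.sqrt (1 - (vStar 0 ^ 2 + vStar 1 ^ 2 + vStar 2 ^ 2))) * (B 2 - BStar 2)) ((v 1 - vStar 1) * B 2 - (v 2 - vStar 2) * B 1) ((v 2 - vStar 2) * B 0 - (v 0 - vStar 0) * B 2) ((v 0 - vStar 0) * B 1 - (v 1 - vStar 1) * B 0) (vStar 0 * (B 0 - BStar 0) + vStar 1 * (B 1 - BStar 1) + vStar 2 * (B 2 - BStar 2))
  have hdot : (((Real.sqrt (1 - (vStar 0 ^ 2 + vStar 1 ^ 2 + vStar 2 ^ 2))) * (((1 - (vStar 0 ^ 2 + vStar 1 ^ 2 + vStar 2 ^ 2)) * v 0 - (1 - (v 0 * vStar 0 + v 1 * vStar 1 + v 2 * vStar 2)) * vStar 0) - ((v 0 * vStar 0 + v 1 * vStar 1 + v 2 * vStar 2) - (vStar 0 ^ 2 + vStar 1 ^ 2 + vStar 2 ^ 2)) * vStar 0)) * ((Real.sqrt (1 - (vStar 0 ^ 2 + vStar 1 ^ 2 + vStar 2 ^ 2))) * (B 0 - BStar 0)) + ((Real.sqrt (1 - (vStar 0 ^ 2 + vStar 1 ^ 2 + vStar 2 ^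 2))) * (((1 - (vStar 0 ^ 2 + vStar 1 ^ 2 + vStar 2 ^ 2)) * v 1 - (1 - (v 0 * vStar 0 + v 1 * vStar 1 + v 2 * vStar 2)) * vStar 1) - ((v 0 * vStar 0 + v 1 * vStar 1 + v 2 * vStar 2) - (vStar 0 ^ 2 + vStar 1 ^ 2 + vStar 2 ^ 2)) * vStar 1)) * ((Real.sqrt (1 - (vStar 0 ^ 2 + vStar 1 ^ 2 + vStar 2 ^ 2))) * (B 1 - BStar 1)) + ((Real.sqrt (1 - (vStar 0 ^ 2 + vStar 1 ^ 2 + vStar 2 ^ 2))) * (((1 - (vStar 0 ^ 2 + vStar 1 ^ 2 + vStar 2 ^ 2)) * v 2 - (1 - (v 0 * vStar 0 + v 1 * vStar 1 + v 2 * vStar 2)) * vStar 2) - ((v 0 * vStar 0 + v 1 * vStar 1 + v 2 * vStar 2) - (vStar 0 ^ 2 + vStar 1 ^ 2 + vStar 2 ^ 2)) * vStar 2)) * ((Real.sqrt (1 - (vStar 0 ^ 2 + vStar 1 ^ 2 + vStar 2 ^ 2))) * (B 2 - BStar 2)) + ((1 - (vStar 0 ^ 2 + vStar 1 ^ 2 +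 vStar 2 ^ 2)) * (v 1 * vStar 2 - v 2 * vStar 1)) * ((v 1 - vStar 1) * B 2 - (v 2 - vStar 2) * B 1) + ((1 - (vStar 0 ^ 2 + vStar 1 ^ 2 + vStar 2 ^ 2)) * (v 2 * vStar 0 - v 0 * vStar 2)) * ((v 2 - vStar 2) * B 0 - (v 0 - vStar 0) * B 2) + ((1 - (vStar 0 ^ 2 + vStar 1 ^ 2 + vStar 2 ^ 2)) * (v 0 * vStar 1 - v 1 * vStar 0)) * ((v 0 - vStar 0) * B 1 - (v 1 - vStar 1) * B 0) + (((v 0 * vStar 0 + v 1 * vStar 1 + v 2 * vStar 2) - (vStar 0 ^ 2 + vStar 1 ^ 2 + vStar 2 ^ 2)) * (1 - (vStar 0 ^ 2 + vStar 1 ^ 2 + vStar 2 ^ 2))) * (vStar 0 * (B 0 - BStar 0) + vStar 1 * (B 1 - BStar 1) + vStar 2 * (B 2 - BStar 2))) = (1 - (vStar 0 ^ 2 + vStar 1 ^ 2 + vStar 2 ^ 2)) * (((1 - (vStar 0 ^ 2 + vStar 1 ^ 2 + vStar 2 ^ 2)) * v 0 - (1 - (v 0 * vStar 0 + v 1 *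 vStar 1 + v 2 * vStar 2)) * vStar 0) * (B 0 - BStar 0) + ((1 - (vStar 0 ^ 2 + vStar 1 ^ 2 + vStar 2 ^ 2)) * v 1 - (1 - (v 0 * vStar 0 + v 1 * vStar 1 + v 2 * vStar 2)) * vStar 1) * (B 1 - BStar 1) + ((1 - (vStar 0 ^ 2 + vStar 1 ^ 2 + vStar 2 ^ 2)) * v 2 - (1 - (v 0 * vStar 0 + v 1 * vStar 1 + v 2 * vStar 2)) * vStar 2) * (B 2 - BStar 2) + (v 1 * vStar 2 - v 2 * vStar 1) * ((v 1 - vStar 1) * B 2 - (v 2 - vStar 2) * B 1) + (v 2 * vStar 0 - v 0 * vStar 2) * ((v 2 - vStar 2) * B 0 - (v 0 - vStar 0) * B 2) + (v 0 * vStar 1 - v 1 * vStar 0) * ((v 0 - vStar 0) * B 1 - (v 1 - vStar 1) * B 0)) := by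
    linear_combination ((((1 - (vStar 0 ^ 2 + vStar 1 ^ 2 + vStar 2 ^ 2)) * v 0 - (1 - (v 0 * vStar 0 + v 1 * vStar 1 + v 2 * vStar 2)) * vStar 0) - ((v 0 * vStar 0 + v 1 * vStar 1 + v 2 * vStar 2) - (vStar 0 ^ 2 + vStar 1 ^ 2 + vStar 2 ^ 2)) * vStar 0) * (B 0 - BStar 0) + (((1 - (vStar 0 ^ 2 + vStar 1 ^ 2 + vStar 2 ^ 2)) * v 1 - (1 - (v 0 * vStar 0 + v 1 * vStar 1 + v 2 * vStar 2)) * vStar 1) - ((v 0 * vStar 0 + v 1 * vStar 1 + v 2 * vStar 2) - (vStar 0 ^ 2 + vStar 1 ^ 2 + vStar 2 ^ 2)) * vStar 1) * (B 1 - BStar 1) + (((1 - (vStar 0 ^ 2 + vStar 1 ^ 2 + vStar 2 ^ 2)) * v 2 - (1 - (v 0 * vStar 0 + v 1 * vStar 1 + v 2 * vStar 2)) * vStar 2) - ((v 0 * vStar 0 + v 1 * vStar 1 + v 2 * vStar 2) - (vStar 0 ^ 2 + vStar 1 ^ 2 + vStar 2 ^ 2)) * vStar 2) * (B 2 - BStar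 2)) * hsg2
  have hnorm : (((Real.sqrt (1 - (vStar 0 ^ 2 + vStar 1 ^ 2 + vStar 2 ^ 2))) * (((1 - (vStar 0 ^ 2 + vStar 1 ^ 2 + vStar 2 ^ 2)) * v 0 - (1 - (v 0 * vStar 0 + v 1 * vStar 1 + v 2 * vStar 2)) * vStar 0) - ((v 0 * vStar 0 + v 1 * vStar 1 + v 2 * vStar 2) - (vStar 0 ^ 2 + vStar 1 ^ 2 + vStar 2 ^ 2)) * vStar 0)) ^ 2 + ((Real.sqrt (1 - (vStar 0 ^ 2 + vStar 1 ^ 2 + vStar 2 ^ 2))) * (((1 - (vStar 0 ^ 2 + vStar 1 ^ 2 + vStar 2 ^ 2)) * v 1 - (1 - (v 0 * vStar 0 + v 1 * vStar 1 + v 2 * vStar 2)) * vStar 1) - ((v 0 * vStar 0 + v 1 * vStar 1 + v 2 * vStar 2) - (vStar 0 ^ 2 + vStar 1 ^ 2 + vStar 2 ^ 2)) * vStar 1)) ^ 2 + ((Real.sqrt (1 - (vStar 0 ^ 2 + vStar 1 ^ 2 + vStar 2 ^ 2))) * (((1 - (vStar 0 ^ 2 + vStar 1 ^ 2 + vStar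 2 ^ 2)) * v 2 - (1 - (v 0 * vStar 0 + v 1 * vStar 1 + v 2 * vStar 2)) * vStar 2) - ((v 0 * vStar 0 + v 1 * vStar 1 + v 2 * vStar 2) - (vStar 0 ^ 2 + vStar 1 ^ 2 + vStar 2 ^ 2)) * vStar 2)) ^ 2 + ((1 - (vStar 0 ^ 2 + vStar 1 ^ 2 + vStar 2 ^ 2)) * (v 1 * vStar 2 - v 2 * vStar 1)) ^ 2 + ((1 - (vStar 0 ^ 2 + vStar 1 ^ 2 + vStar 2 ^ 2)) * (v 2 * vStar 0 - v 0 * vStar 2)) ^ 2 + ((1 - (vStar 0 ^ 2 + vStar 1 ^ 2 + vStar 2 ^ 2)) * (v 0 * vStar 1 - v 1 * vStar 0)) ^ 2 + (((v 0 * vStar 0 + v 1 * vStar 1 + v 2 * vStar 2) - (vStar 0 ^ 2 + vStar 1 ^ 2 + vStar 2 ^ 2)) * (1 - (vStar 0 ^ 2 + vStar 1 ^ 2 + vStar 2 ^ 2))) ^ 2) = (1 - (vStar 0 ^ 2 + vStar 1 ^ 2 + vStar 2 ^ 2)) ^ 2 * ((v 0 ^ 2 + v 1 ^ 2 + v 2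 ^ 2) + (vStar 0 ^ 2 + vStar 1 ^ 2 + vStar 2 ^ 2) - 2 * (v 0 * vStar 0 + v 1 * vStar 1 + v 2 * vStar 2)) := by
    linear_combination ((((1 - (vStar 0 ^ 2 + vStar 1 ^ 2 + vStar 2 ^ 2)) * v 0 - (1 - (v 0 * vStar 0 + v 1 * vStar 1 + v 2 * vStar 2)) * vStar 0) - ((v 0 * vStar 0 + v 1 * vStar 1 + v 2 * vStar 2) - (vStar 0 ^ 2 + vStar 1 ^ 2 + vStar 2 ^ 2)) * vStar 0) ^ 2 + (((1 - (vStar 0 ^ 2 + vStar 1 ^ 2 + vStar 2 ^ 2)) * v 1 - (1 - (v 0 * vStar 0 + v 1 * vStar 1 + v 2 * vStar 2)) * vStar 1) - ((v 0 * vStar 0 + v 1 * vStar 1 + v 2 * vStar 2) - (vStar 0 ^ 2 + vStar 1 ^ 2 + vStar 2 ^ 2)) * vStar 1) ^ 2 + (((1 - (vStar 0 ^ 2 + vStar 1 ^ 2 + vStar 2 ^ 2)) * v 2 - (1 - (v 0 * vStar 0 + v 1 * vStar 1 + v 2 * vStar 2)) * vStar 2) - ((v 0 * vStar 0 + v 1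 * vStar 1 + v 2 * vStar 2) - (vStar 0 ^ 2 + vStar 1 ^ 2 + vStar 2 ^ 2)) * vStar 2) ^ 2) * hsg2
  have heta : (((Real.sqrt (1 - (vStar 0 ^ 2 + vStar 1 ^ 2 + vStar 2 ^ 2))) * (B 0 - BStar 0)) ^ 2 + ((Real.sqrt (1 - (vStar 0 ^ 2 + vStar 1 ^ 2 + vStar 2 ^ 2))) * (B 1 - BStar 1)) ^ 2 + ((Real.sqrt (1 - (vStar 0 ^ 2 + vStar 1 ^ 2 + vStar 2 ^ 2))) * (B 2 - BStar 2)) ^ 2 + ((v 1 - vStar 1) * B 2 - (v 2 - vStar 2) * B 1) ^ 2 + ((v 2 - vStar 2) * B 0 - (v 0 - vStar 0) * B 2) ^ 2 + ((v 0 - vStar 0) * B 1 - (v 1 - vStar 1) * B 0) ^ 2 + (vStar 0 * (B 0 - BStar 0) + vStar 1 * (B 1 - BStar 1) + vStar 2 * (B 2 - BStar 2)) ^ 2) = 2 * (((1 - (vStar 0 ^ 2 + vStar 1 ^ 2 + vStar 2 ^ 2)) * ((B 0 - BStar 0) ^ 2 + (B 1 - BStar 1) ^ 2 + (B 2 - BStar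 2) ^ 2) + (((v 1 - vStar 1) * B 2 - (v 2 - vStar 2) * B 1) ^ 2 + ((v 2 - vStar 2) * B 0 - (v 0 - vStar 0) * B 2) ^ 2 + ((v 0 - vStar 0) * B 1 - (v 1 - vStar 1) * B 0) ^ 2) + (vStar 0 * (B 0 - BStar 0) + vStar 1 * (B 1 - BStar 1) + vStar 2 * (B 2 - BStar 2)) ^ 2) / 2) := by
    linear_combination ((B 0 - BStar 0) ^ 2 + (B 1 - BStar 1) ^ 2 + (B 2 - BStar 2) ^ 2) * hsg2
  have h1 : ((1 - (vStar 0 ^ 2 + vStar 1 ^ 2 + vStar 2 ^ 2)) * (((1 - (vStar 0 ^ 2 + vStar 1 ^ 2 + vStar 2 ^ 2)) * v 0 - (1 - (v 0 * vStar 0 + v 1 * vStar 1 + v 2 * vStar 2)) * vStar 0) * (B 0 - BStar 0) + ((1 - (vStar 0 ^ 2 + vStar 1 ^ 2 + vStar 2 ^ 2)) * v 1 - (1 - (v 0 * vStar 0 + v 1 * vStar 1 + v 2 * vStar 2)) * vStar 1) * (B 1 - BStar 1) + ((1 - (vStar 0 ^ 2 + vStar 1 ^ 2 + vStar 2 ^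 2)) * v 2 - (1 - (v 0 * vStar 0 + v 1 * vStar 1 + v 2 * vStar 2)) * vStar 2) * (B 2 - BStar 2) + (v 1 * vStar 2 - v 2 * vStar 1) * ((v 1 - vStar 1) * B 2 - (v 2 - vStar 2) * B 1) + (v 2 * vStar 0 - v 0 * vStar 2) * ((v 2 - vStar 2) * B 0 - (v 0 - vStar 0) * B 2) + (v 0 * vStar 1 - v 1 * vStar 0) * ((v 0 - vStar 0) * B 1 - (v 1 - vStar 1) * B 0))) ^ 2 ≤ ((1 - (vStar 0 ^ 2 + vStar 1 ^ 2 + vStar 2 ^ 2)) ^ 2 * ((v 0 ^ 2 + v 1 ^ 2 + v 2 ^ 2) + (vStar 0 ^ 2 + vStar 1 ^ 2 + vStar 2 ^ 2) - 2 * (v 0 * vStar 0 + v 1 * vStar 1 + v 2 * vStar 2))) * (2 * (((1 - (vStar 0 ^ 2 + vStar 1 ^ 2 + vStar 2 ^ 2)) * ((B 0 - BStar 0) ^ 2 + (B 1 - BStar 1) ^ 2 + (B 2 - BStar 2) ^ 2) + (((v 1 - vStar 1) * B 2 - (v 2 - vStar 2) * B 1) ^ 2 + ((v 2 - vStar 2)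 * B 0 - (v 0 - vStar 0) * B 2) ^ 2 + ((v 0 - vStar 0) * B 1 - (v 1 - vStar 1) * B 0) ^ 2) + (vStar 0 * (B 0 - BStar 0) + vStar 1 * (B 1 - BStar 1) + vStar 2 * (B 2 - BStar 2)) ^ 2) / 2)) := by
    rw [← hdot, ← hnorm, ← heta]; exact hcs
  have hL2 : ((((1 - (vStar 0 ^ 2 + vStar 1 ^ 2 + vStar 2 ^ 2)) * v 0 - (1 - (v 0 * vStar 0 + v 1 * vStar 1 + v 2 * vStar 2)) * vStar 0) * (B 0 - BStar 0) + ((1 - (vStar 0 ^ 2 + vStar 1 ^ 2 + vStar 2 ^ 2)) * v 1 - (1 - (v 0 * vStar 0 + v 1 * vStar 1 + v 2 * vStar 2)) * vStar 1) * (B 1 - BStar 1) + ((1 - (vStar 0 ^ 2 + vStar 1 ^ 2 + vStar 2 ^ 2)) * v 2 - (1 - (v 0 * vStar 0 + v 1 * vStar 1 + v 2 * vStar 2)) * vStar 2) * (B 2 - BStar 2) + (v 1 * vStar 2 - v 2 * vStar 1) * ((v 1 - vStar 1) * B 2 - (v 2 - vStar 2) * B 1) + (v 2 * vStar 0 - v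 0 * vStar 2) * ((v 2 - vStar 2) * B 0 - (v 0 - vStar 0) * B 2) + (v 0 * vStar 1 - v 1 * vStar 0) * ((v 0 - vStar 0) * B 1 - (v 1 - vStar 1) * B 0))) ^ 2 ≤ ((v 0 ^ 2 + v 1 ^ 2 + v 2 ^ 2) + (vStar 0 ^ 2 + vStar 1 ^ 2 + vStar 2 ^ 2) - 2 * (v 0 * vStar 0 + v 1 * vStar 1 + v 2 * vStar 2)) * (2 * (((1 - (vStar 0 ^ 2 + vStar 1 ^ 2 + vStar 2 ^ 2)) * ((B 0 - BStar 0) ^ 2 + (B 1 - BStar 1) ^ 2 + (B 2 - BStar 2) ^ 2) + (((v 1 - vStar 1) * B 2 - (v 2 - vStar 2) * B 1) ^ 2 + ((v 2 - vStar 2) * B 0 - (v 0 - vStar 0) * B 2) ^ 2 + ((v 0 - vStar 0) * B 1 - (v 1 - vStar 1) * B 0) ^ 2) + (vStar 0 * (B 0 - BStar 0) + vStar 1 * (B 1 - BStar 1) + vStar 2 * (B 2 - BStar 2)) ^ 2) / 2)) :=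
    csdiv (vStar 0 ^ 2 + vStar 1 ^ 2 + vStar 2 ^ 2) (((1 - (vStar 0 ^ 2 + vStar 1 ^ 2 + vStar 2 ^ 2)) * v 0 - (1 - (v 0 * vStar 0 + v 1 * vStar 1 + v 2 * vStar 2)) * vStar 0) * (B 0 - BStar 0) + ((1 - (vStar 0 ^ 2 + vStar 1 ^ 2 + vStar 2 ^ 2)) * v 1 - (1 - (v 0 * vStar 0 + v 1 * vStar 1 + v 2 * vStar 2)) * vStar 1) * (B 1 - BStar 1) + ((1 - (vStar 0 ^ 2 + vStar 1 ^ 2 + vStar 2 ^ 2)) * v 2 - (1 - (v 0 * vStar 0 + v 1 * vStar 1 + v 2 * vStar 2)) * vStar 2) * (B 2 - BStar 2) + (v 1 * vStar 2 - v 2 * vStar 1) * ((v 1 - vStar 1) * B 2 - (v 2 - vStar 2) * B 1) + (v 2 * vStar 0 - v 0 * vStar 2) * ((v 2 - vStar 2) * B 0 - (v 0 - vStar 0) * B 2) + (v 0 * vStar 1 - v 1 * vStar 0) * ((v 0 - vStar 0) * B 1 - (v 1 - vStar 1) * B 0)) ((v 0 ^ 2 + v 1 ^ 2 + v 2 ^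 2) + (vStar 0 ^ 2 + vStar 1 ^ 2 + vStar 2 ^ 2) - 2 * (v 0 * vStar 0 + v 1 * vStar 1 + v 2 * vStar 2)) (2 * (((1 - (vStar 0 ^ 2 + vStar 1 ^ 2 + vStar 2 ^ 2)) * ((B 0 - BStar 0) ^ 2 + (B 1 - BStar 1) ^ 2 + (B 2 - BStar 2) ^ 2) + (((v 1 - vStar 1) * B 2 - (v 2 - vStar 2) * B 1) ^ 2 + ((v 2 - vStar 2) * B 0 - (v 0 - vStar 0) * B 2) ^ 2 + ((v 0 - vStar 0) * B 1 - (v 1 - vStar 1) * B 0) ^ 2) + (vStar 0 * (B 0 - BStar 0) + vStar 1 * (B 1 - BStar 1) + vStar 2 * (B 2 - BStar 2)) ^ 2) / 2)) hslt h1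
  have hAM := amgm (((1 - (vStar 0 ^ 2 + vStar 1 ^ 2 + vStar 2 ^ 2)) * v 0 - (1 - (v 0 * vStar 0 + v 1 * vStar 1 + v 2 * vStar 2)) * vStar 0) * (B 0 - BStar 0) + ((1 - (vStar 0 ^ 2 + vStar 1 ^ 2 + vStar 2 ^ 2)) * v 1 - (1 - (v 0 * vStar 0 + v 1 * vStar 1 + v 2 * vStar 2)) * vStar 1) * (B 1 - BStar 1) + ((1 - (vStar 0 ^ 2 + vStar 1 ^ 2 + vStar 2 ^ 2)) * v 2 - (1 - (v 0 * vStar 0 + v 1 * vStar 1 + v 2 * vStar 2)) * vStar 2) * (B 2 - BStar 2) + (v 1 * vStar 2 - v 2 * vStar 1) * ((v 1 - vStar 1) * B 2 - (v 2 - vStar 2) * B 1) + (v 2 * vStar 0 - v 0 * vStar 2) * ((v 2 - vStar 2) * B 0 - (v 0 - vStar 0) * B 2) + (v 0 * vStar 1 - v 1 * vStar 0) * ((v 0 - vStar 0) * B 1 - (v 1 - vStar 1) * B 0)) ((v 0 ^ 2 + v 1 ^ 2 + v 2 ^ 2) + (vStar 0 ^ 2 + vStar 1 ^ 2 + vStar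 2 ^ 2) - 2 * (v 0 * vStar 0 + v 1 * vStar 1 + v 2 * vStar 2)) (2 * (((1 - (vStar 0 ^ 2 + vStar 1 ^ 2 + vStar 2 ^ 2)) * ((B 0 - BStar 0) ^ 2 + (B 1 - BStar 1) ^ 2 + (B 2 - BStar 2) ^ 2) + (((v 1 - vStar 1) * B 2 - (v 2 - vStar 2) * B 1) ^ 2 + ((v 2 - vStar 2) * B 0 - (v 0 - vStar 0) * B 2) ^ 2 + ((v 0 - vStar 0) * B 1 - (v 1 - vStar 1) * B 0) ^ 2) + (vStar 0 * (B 0 - BStar 0) + vStar 1 * (B 1 - BStar 1) + vStar 2 * (B 2 - BStar 2)) ^ 2) / 2)) (ρ * H) (Real.sqrt (ρ * H)) hL2 hsk2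
    hsk0.le hA0 hRmag0 (by positivity)
  have hCore := core (v 0 ^ 2 + v 1 ^ 2 + v 2 ^ 2) (vStar 0 ^ 2 + vStar 1 ^ 2 + vStar 2 ^ 2) (v 0 * vStar 0 + v 1 * vStar 1 + v 2 * vStar 2) W (Real.sqrt (1 - (vStar 0 ^ 2 + vStar 1 ^ 2 + vStar 2 ^ 2))) (Real.sqrt (ρ ^ 2 + p ^ 2)) ρ p (ρ * H) hρ hp hW2 hsg2 hsg0
    ha0 hslt hA0 hr0 hr2 hkr
  rw [hgoalL, hgoalR, le_div_iff₀ hsk0]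
  exact final_combine _ _ _ _ _ _ _ hAM hCore (by ring)
end

section
/- Let v, v* ∈ R^3 with |v| < 1, |v*| < 1, and B, B* ∈ R^3, ρ, p, H > 0, W = 1/√(1-|v|²). With U = (ρW, (ρHW²+|B|²)v - (v·B)B, B, ρHW² - p - ((1-|v|²)|B|²+(v·B)²)/2 + |B|²)ᵀ, ξ* and p*_m as in the second equivalent form, the following splitting identity holds: U·ξ* + p*_m = [ρHW²(1 - v·v*) - p - ρW√(1-|v*|²)] + [((1-|v*|²)|B-B*|²)/2 + (|v-v*|²|B|²)/2 - (((v-v*)·B)²)/2 + ((v*·(B-B*))²)/2]. -/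
private lemma cv5 {α : Type*} (a : α) (u : Fin 7 → α) : Matrix.vecCons a u 5 = u 4 := rfl
private lemma cv6 {α : Type*} (a : α) (u : Fin 7 → α) : Matrix.vecCons a u 6 = u 5 := rfl
private lemma cv7 {α : Type*} (a : α) (u : Fin 7 → α) : Matrix.vecCons a u 7 = u 6 := rfl
private lemma cv75 {α : Type*} (a : α) (u : Fin 6 → α) : Matrix.vecCons a u 5 = u 4 := rfl
private lemma cv76 {α : Type*} (a : α) (u : Fin 6 → α) : Matrix.vecCons a u 6 = u 5 := rfl
private lemma cv65 {α : Type*} (a : α) (u : Fin 5 → α) : Matrix.vecCons a u 5 = u 4 := rfl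

set_option maxHeartbeats 1000000 in
/-- The splitting identity `Π₁ = Π₁⁽¹⁾ + Π₁⁽²⁾`: with
`U = (ρW, (ρHW²+|B|²)v - (v·B)B, B, ρHW² - p - ((1-|v|²)|B|²+(v·B)²)/2 + |B|²)ᵀ`,
`U·ξ* + p*_m = [ρHW²(1-v·v*) - p - ρW√(1-|v*|²)]
  + [((1-|v*|²)|B-B*|²)/2 + (|v-v*|²|B|²)/2 - (((v-v*)·B)²)/2 + ((v*·(B-B*))²)/2]`. -/
theorem stmt17 (v vs B Bs : Fin 3 → ℝ)
    (hv : Real.sqrt (∑ i, v i ^ 2) < 1) (hvs : Real.sqrt (∑ i, vs i ^ 2) < 1)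
    (ρ p H : ℝ) (hρ : 0 < ρ) (hp : 0 < p) (hH : 0 < H)
    (W : ℝ) (hW : W = 1 / Real.sqrt (1 - ∑ i, v i ^ 2))
    (U : Fin 8 → ℝ)
    (hU : U = ![ρ * W,
        (ρ * H * W ^ 2 + ∑ i, B i ^ 2) * v 0 - (∑ i, v i * B i) * B 0,
        (ρ * H * W ^ 2 + ∑ i, B i ^ 2) * v 1 - (∑ i, v i * B i) * B 1,
        (ρ * H * W ^ 2 + ∑ i, B i ^ 2) * v 2 - (∑ i, v i * B i) * B 2,
        B 0, B 1, B 2,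
        ρ * H * W ^ 2 - p
          - ((1 - ∑ i, v i ^ 2) * (∑ i, B i ^ 2) + (∑ i, v i * B i) ^ 2) / 2
          + ∑ i, B i ^ 2]) :
    (∑ j, U j * xiStar vs Bs j) + pmStar vs Bs
      = (ρ * H * W ^ 2 * (1 - ∑ i, v i * vs i) - p
          - ρ * W * Real.sqrt (1 - ∑ i, vs i ^ 2))
        + ((1 - ∑ i, vs i ^ 2) * (∑ i, (B i - Bs i) ^ 2) / 2
          + (∑ i, (v i - vs i) ^ 2) * (∑ i, B i ^ 2) / 2
          - (∑ i, (v i - vs i) * B i) ^ 2 / 2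
          + (∑ i, vs i * (B i - Bs i)) ^ 2 / 2) := by
  subst hU
  simp only [xiStar, pmStar, Fin.sum_univ_eight, Fin.sum_univ_three, cv5, cv6, cv7, cv75, cv76, cv65,
    Matrix.cons_val_zero, Matrix.cons_val_one, Matrix.head_cons,
    Matrix.cons_val_two, Matrix.cons_val_three, Matrix.cons_val_four,
    Matrix.cons_val_fin_one, Matrix.tail_cons]
  ring
end
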